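/- Let ψ₁, ψ₂, μ : [0,T] → ℝ with ψ = (ψ₁, ψ₂) absolutely continuous and μ constant on an interval Δ ⊆ [0,T]. Suppose on a measurable set S₁ ⊆ Δ we have ψ₁(t) = μ(t), ψ₂(t) ≠ 0, and the adjoint equation ψ̇₁(t) = −ψ₂(t)·g(t) holds a.e. on Δ, where g(t) ≠ 0 for all t ∈ S₁. Then S₁ has Lebesgue measure zero. -/

import Mathlib

/-!
On `S₁` the function `ψ₁` is constant, while at almost every point of `S₁` it has the nonzero
derivative `-(ψ₂ t * g t)`. A function with nonzero derivative at `t` takes its value at `t`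
nowhere else near `t`, so these points are isolated in the set they form. A discrete subset
of `ℝ` is countable, hence null, and so is `S₁`.
-/

open MeasureTheory Filter Topology Set

variable {𝕜 : Type*} [NontriviallyNormedField 𝕜] {F : Type*} [NormedAddCommGroup F]
  [NormedSpace 𝕜 F] {f : 𝕜 → F} {s : Set 𝕜} {c : F}

theorem isDiscrete_setOf_hasDerivAt_ne_zero_of_forall_eq (hf : ∀ x ∈ s, f x = c) :
    IsDiscrete {x ∈ s | ∃ f', f' ≠ 0 ∧ HasDerivAt f f' x} := by
  refine isDiscrete_iff_nhdsNE.mpr fun x ⟨_, f', hf', hderiv⟩ => ?_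
  rw [← disjoint_iff, disjoint_principal_right]
  filter_upwards [hderiv.eventually_ne (c := c) hf'] with y hy hyD
  exact hy (hf y hyD.1)

theorem countable_setOf_hasDerivAt_ne_zero_of_forall_eq [SecondCountableTopology 𝕜]
    (hf : ∀ x ∈ s, f x = c) : {x ∈ s | ∃ f', f' ≠ 0 ∧ HasDerivAt f f' x}.Countable :=
  (HereditarilyLindelofSpace.isLindelof _).countable_of_isDiscrete
    (isDiscrete_setOf_hasDerivAt_ne_zero_of_forall_eq hf)

theorem stmt_4_general (ψ₁ ψ₂ μ g : ℝ → ℝ) (Δ S₁ : Set ℝ)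
    (hμ : ∃ m : ℝ, ∀ t ∈ Δ, μ t = m)
    (hS : S₁ ⊆ Δ)
    (hψ₁ : ∀ t ∈ S₁, ψ₁ t = μ t)
    (hψ₂ : ∀ t ∈ S₁, ψ₂ t ≠ 0)
    (hg : ∀ t ∈ S₁, g t ≠ 0)
    (hadj : ∀ᵐ t, t ∈ Δ → HasDerivAt ψ₁ (-(ψ₂ t * g t)) t) :
    volume S₁ = 0 := by
  obtain ⟨m, hm⟩ := hμ
  have hconst : ∀ t ∈ S₁, ψ₁ t = m := fun t ht => (hψ₁ t ht).trans (hm t (hS ht))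
  have hnull := (countable_setOf_hasDerivAt_ne_zero_of_forall_eq hconst).measure_zero volume
  rw [measure_eq_zero_iff_ae_notMem] at hnull ⊢
  filter_upwards [hadj, hnull] with t hderiv hnotMem ht
  exact hnotMem ⟨ht, _, neg_ne_zero.mpr (mul_ne_zero (hψ₂ t ht) (hg t ht)), hderiv (hS ht)⟩

/-- Proposition 2(a): with μ constant on an interval Δ, if on a measurable set
S₁ ⊆ Δ we have ψ₁ = μ, ψ₂ ≠ 0, g ≠ 0, and the adjoint equation
ψ̇₁ = −ψ₂·g holds a.e. on Δ, then S₁ is Lebesgue-null. -/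
theorem stmt_4 (T : ℝ) (ψ₁ ψ₂ μ g : ℝ → ℝ) (Δ S₁ : Set ℝ)
    (hΔ : Δ ⊆ Set.Icc 0 T) (hΔint : Δ.OrdConnected)
    (hμ : ∃ m : ℝ, ∀ t ∈ Δ, μ t = m)
    (hS : S₁ ⊆ Δ) (hSm : MeasurableSet S₁)
    (hψ₁ : ∀ t ∈ S₁, ψ₁ t = μ t)
    (hψ₂ : ∀ t ∈ S₁, ψ₂ t ≠ 0)
    (hg : ∀ t ∈ S₁, g t ≠ 0)
    (hadj : ∀ᵐ t, t ∈ Δ → HasDerivAt ψ₁ (-(ψ₂ t * g t)) t) :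
    volume S₁ = 0 :=
  stmt_4_general ψ₁ ψ₂ μ g Δ S₁ hμ hS hψ₁ hψ₂ hg hadj
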